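/- arXiv:1001.5279 — 2 statements merged into one kernel-verified Lean document; each statement's English description precedes it below -/
import Mathlib

section
/- Let ψ be a continuous positive function on (A,B) with 1 ≤ A < B ≤ ∞, and let G(ψ) be the Grand Lebesgue Space with norm ‖f‖ = sup_{p ∈ (A,B)} |f|_p / ψ(p). Then the fundamental function of G(ψ) satisfies φ(G(ψ), δ) = sup_{p ∈ (A,B)} δ^{1/p} / ψ(p). -/
/-!
Among sets of measure at most `δ`, the quantity `sup_p m(S)^(1/p) / ψ p` depends only on
`t = m(S) ∈ [0, δ]` and is monotone in `t`, so it is largest for an interval of length `δ`.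
Monotonicity must survive Lean's convention that an unbounded real supremum is `0`: for
`0 < t ≤ δ` the family at `δ` is at most `δ / t` times the family at `t`, so the two are
bounded or unbounded together.
-/

open MeasureTheory Set

lemma Real.iSup_mono_of_bddAbove_imp {ι : Sort*} {f g : ι → ℝ} (hf : ∀ i, 0 ≤ f i)
    (hfg : ∀ i, f i ≤ g i) (hbdd : BddAbove (range f) → BddAbove (range g)) :
    ⨆ i, f i ≤ ⨆ i, g i := by
  by_cases hf_bdd : BddAbove (range f)
  · exact ciSup_mono (hbdd hf_bdd) hfg
  · rw [Real.iSup_of_not_bddAbove hf_bdd]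
    exact Real.iSup_nonneg fun i => (hf i).trans (hfg i)

lemma Real.rpow_le_div_mul_rpow {t δ e K : ℝ} (ht : 0 < t) (htδ : t ≤ δ) (he : e ≤ K) :
    δ ^ e ≤ (δ / t) ^ K * t ^ e := by
  have hδt : 1 ≤ δ / t := (one_le_div ht).2 htδ
  calc δ ^ e = (δ / t) ^ e * t ^ e := by
        rw [Real.div_rpow (ht.le.trans htδ) ht.le, div_mul_cancel₀ _ (Real.rpow_pos_of_pos ht e).ne']
    _ ≤ (δ / t) ^ K * t ^ e := by gcongr

lemma monotoneOn_iSup_rpow_div {ι : Sort*} {e w : ι → ℝ} (he_pos : ∀ i, 0 < e i)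
    (he_bdd : BddAbove (range e)) (hw : ∀ i, 0 ≤ w i) :
    MonotoneOn (fun t => ⨆ i, t ^ e i / w i) (Ici 0) := by
  intro t (ht : 0 ≤ t) δ _ htδ
  rcases ht.eq_or_lt with rfl | ht
  · simp only [Real.zero_rpow (he_pos _).ne', zero_div, Real.iSup_const_zero]
    exact Real.iSup_nonneg fun i => div_nonneg (Real.rpow_nonneg htδ _) (hw i)
  obtain ⟨K, hK⟩ := he_bdd
  have hscale : ∀ i, δ ^ e i / w i ≤ (δ / t) ^ K * (t ^ e i / w i) := fun i => by
    rw [← mul_div_assoc]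
    exact div_le_div_of_nonneg_right (Real.rpow_le_div_mul_rpow ht htδ (hK ⟨i, rfl⟩)) (hw i)
  refine Real.iSup_mono_of_bddAbove_imp
    (fun i => div_nonneg (Real.rpow_nonneg ht.le _) (hw i))
    (fun i => div_le_div_of_nonneg_right (Real.rpow_le_rpow ht.le htδ (he_pos i).le) (hw i)) ?_
  rintro ⟨M, hM⟩
  refine ⟨(δ / t) ^ K * M, ?_⟩
  rintro _ ⟨i, rfl⟩
  have hratio : 0 ≤ (δ / t) ^ K := Real.rpow_nonneg (div_nonneg (ht.le.trans htδ) ht.le) _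
  exact (hscale i).trans (mul_le_mul_of_nonneg_left (hM ⟨i, rfl⟩) hratio)

theorem fundamental_function_GLS_general (A B : ℝ) (hA : 1 ≤ A)
    (ψ : ℝ → ℝ)
    (hψ : ∀ p ∈ Set.Ioo A B, 0 < ψ p)
    (δ : ℝ) (hδ : 0 < δ) :
    sSup {r : ℝ | ∃ S : Set ℝ, MeasurableSet S ∧
        volume S ≤ ENNReal.ofReal δ ∧
        r = ⨆ p : Set.Ioo A B, (volume S).toReal ^ (1 / (p : ℝ)) / ψ p} =
      ⨆ p : Set.Ioo A B, δ ^ (1 / (p : ℝ)) / ψ p := by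
  have hp : ∀ p : Ioo A B, 1 ≤ (p : ℝ) := fun p => hA.trans p.2.1.le
  have hmono := monotoneOn_iSup_rpow_div (e := fun p : Ioo A B => 1 / (p : ℝ)) (w := fun p => ψ p)
    (fun p => one_div_pos.2 (zero_lt_one.trans_le (hp p)))
    ⟨1, by rintro _ ⟨p, rfl⟩; exact div_le_one_of_le₀ (hp p) (zero_le_one.trans (hp p))⟩
    (fun p => (hψ p p.2).le)
  refine IsGreatest.csSup_eq ⟨⟨Ioo 0 δ, measurableSet_Ioo, ?_, ?_⟩, ?_⟩
  · rw [Real.volume_Ioo, sub_zero]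
  · rw [Real.volume_Ioo, sub_zero, ENNReal.toReal_ofReal hδ.le]
  · rintro r ⟨S, -, hS, rfl⟩
    exact hmono ENNReal.toReal_nonneg hδ.le (ENNReal.toReal_le_of_le_ofReal hδ.le hS)

/-- The fundamental function of the Grand Lebesgue Space `G(ψ; A, B)` is
`δ ↦ sup_{p ∈ (A,B)} δ^(1/p) / ψ p`. -/
theorem fundamental_function_GLS (A B : ℝ) (hA : 1 ≤ A) (hAB : A < B)
    (ψ : ℝ → ℝ) (hψc : ContinuousOn ψ (Set.Ioo A B))
    (hψ : ∀ p ∈ Set.Ioo A B, 0 < ψ p)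
    (δ : ℝ) (hδ : 0 < δ) :
    sSup {r : ℝ | ∃ S : Set ℝ, MeasurableSet S ∧
        volume S ≤ ENNReal.ofReal δ ∧
        r = ⨆ p : Set.Ioo A B, (volume S).toReal ^ (1 / (p : ℝ)) / ψ p} =
      ⨆ p : Set.Ioo A B, δ ^ (1 / (p : ℝ)) / ψ p :=
  fundamental_function_GLS_general A B hA ψ hψ δ hδ
end

section
/- Let Φ and Φ₁ be Orlicz functions and n ≥ 2, 0 < k < n with 2k ≤ n. For g(x) = x^k (1-x)^{n-k} on [0,1] extended by 0, and for any Δ > 0, with the Amemiya norms over (0,Δ): ‖T_Δ g‖_{L(Φ)} ≥ (k^k (n-k)^{n-k}/(n+1)^n) · φ(L(Φ), Δ/(n+1)), where (T_Δ g)(x) = g(x/Δ) and φ(L(Φ), δ) = inf_{v>0} v^{-1}(1 + δΦ(v)). -/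
/-!
On `[k/(n+1), (k+1)/(n+1)]` both `x ≥ k/(n+1)` and `1 - x ≥ (n-k)/(n+1)`, so the bump
`x^k (1-x)^(n-k)` is at least `c = k^k (n-k)^(n-k)/(n+1)^n` there; after dilation, `|T_Δ g| ≥ c`
on an interval of length `Δ/(n+1)`. Since `Φ` is nondecreasing, the modular `∫ Φ(v |T_Δ g|)` is
then at least `Δ/(n+1) · Φ(cv)`, and testing the infimum defining `φ(L(Φ), Δ/(n+1))` at `w = cv`
gives `c · φ ≤ v⁻¹ (1 + ∫ Φ(v |T_Δ g|))` for every `v > 0`.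
-/

open MeasureTheory intervalIntegral Set

noncomputable def amemiyaNorm (Φ : ℝ → ℝ) (Δ : ℝ) (f : ℝ → ℝ) : ℝ :=
  ⨅ v : Ioi (0:ℝ), (v : ℝ)⁻¹ * (1 + ∫ x in (0:ℝ)..Δ, Φ (v * |f x|))

noncomputable def orliczFundamentalFunction (Φ : ℝ → ℝ) (δ : ℝ) : ℝ :=
  ⨅ v : Ioi (0:ℝ), (v : ℝ)⁻¹ * (1 + δ * Φ v)

section OrliczModular

variable {Φ : ℝ → ℝ}

lemma MonotoneOn.measurable_comp_of_nonneg {α : Type*} [MeasurableSpace α]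
    (hΦ : MonotoneOn Φ (Ici 0)) {h : α → ℝ} (hh : Measurable h) (h0 : ∀ x, 0 ≤ h x) :
    Measurable fun x => Φ (h x) := by
  have hmono : Monotone fun u => Φ (max u 0) := fun u w huw =>
    hΦ (mem_Ici.2 (le_max_right u 0)) (mem_Ici.2 (le_max_right w 0)) (max_le_max huw le_rfl)
  convert hmono.measurable.comp hh with x
  exact (congrArg Φ (max_eq_left (h0 x))).symm

lemma MonotoneOn.intervalIntegrable_comp_of_bounded (hΦ : MonotoneOn Φ (Ici 0))
    {h : ℝ → ℝ} (hh : Measurable h) {M : ℝ} (h0 : ∀ x, 0 ≤ h x) (hM : ∀ x, h x ≤ M)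
    (hΦnonneg : ∀ u, 0 ≤ u → 0 ≤ Φ u) (a b : ℝ) :
    IntervalIntegrable (fun x => Φ (h x)) volume a b := by
  refine (intervalIntegrable_const (c := Φ M)).mono_fun
    (hΦ.measurable_comp_of_nonneg hh h0).aestronglyMeasurable (ae_of_all _ fun x => ?_)
  have hx0 := h0 x
  dsimp only
  rw [Real.norm_of_nonneg (hΦnonneg _ hx0), Real.norm_of_nonneg (hΦnonneg _ (hx0.trans (hM x)))]
  exact hΦ hx0 (hx0.trans (hM x)) (hM x)

lemma MonotoneOn.mul_le_integral_comp (hΦ : MonotoneOn Φ (Ici 0))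
    (hΦnonneg : ∀ u, 0 ≤ u → 0 ≤ Φ u) {h : ℝ → ℝ} (h0 : ∀ x, 0 ≤ h x)
    {Δ a b c : ℝ} (ha : 0 ≤ a) (hab : a ≤ b) (hbΔ : b ≤ Δ) (hc : 0 ≤ c)
    (hch : ∀ x ∈ Ioc a b, c ≤ h x)
    (hint : IntervalIntegrable (fun x => Φ (h x)) volume 0 Δ) :
    (b - a) * Φ c ≤ ∫ x in (0:ℝ)..Δ, Φ (h x) := by
  have hint' : IntegrableOn (fun x => Φ (h x)) (Ioc 0 Δ) := hint.1
  calc (b - a) * Φ c = Φ c * volume.real (Ioc a b) := by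
        rw [Real.volume_real_Ioc_of_le hab, mul_comm]
    _ ≤ ∫ x in Ioc a b, Φ (h x) :=
        setIntegral_ge_of_const_le_real measurableSet_Ioc measure_Ioc_lt_top.ne
          (fun x hx => hΦ hc (h0 x) (hch x hx)) (hint'.mono_set (Ioc_subset_Ioc ha hbΔ))
    _ ≤ ∫ x in Ioc 0 Δ, Φ (h x) :=
        setIntegral_mono_set hint' (ae_of_all _ fun x => hΦnonneg _ (h0 x))
          (Ioc_subset_Ioc ha hbΔ).eventuallyLE
    _ = ∫ x in (0:ℝ)..Δ, Φ (h x) := (integral_of_le (ha.trans (hab.trans hbΔ))).symm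

lemma bddBelow_range_orliczFundamentalFunction (hΦnonneg : ∀ u, 0 ≤ u → 0 ≤ Φ u) {δ : ℝ} (hδ : 0 ≤ δ) :
    BddBelow (range fun v : Ioi (0:ℝ) => (v : ℝ)⁻¹ * (1 + δ * Φ v)) := by
  refine ⟨0, ?_⟩
  rintro _ ⟨⟨v, hv : 0 < v⟩, rfl⟩
  have : 0 ≤ Φ v := hΦnonneg v hv.le
  positivity

theorem MonotoneOn.mul_orliczFundamentalFunction_le_amemiyaNorm (hΦ : MonotoneOn Φ (Ici 0))
    (hΦnonneg : ∀ u, 0 ≤ u → 0 ≤ Φ u) {f : ℝ → ℝ} {Δ a b c : ℝ}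
    (hint : ∀ v : ℝ, 0 < v → IntervalIntegrable (fun x => Φ (v * |f x|)) volume 0 Δ)
    (ha : 0 ≤ a) (hab : a ≤ b) (hbΔ : b ≤ Δ) (hc : 0 < c) (hcf : ∀ x ∈ Ioc a b, c ≤ |f x|) :
    c * orliczFundamentalFunction Φ (b - a) ≤ amemiyaNorm Φ Δ f := by
  refine le_ciInf fun ⟨v, (hv : 0 < v)⟩ => ?_
  have hcv : 0 < c * v := mul_pos hc hv
  have hmodular : (b - a) * Φ (c * v) ≤ ∫ x in (0:ℝ)..Δ, Φ (v * |f x|) := by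
    refine hΦ.mul_le_integral_comp hΦnonneg (fun x => by positivity) ha hab hbΔ hcv.le
      (fun x hx => ?_) (hint v hv)
    rw [mul_comm c]
    exact mul_le_mul_of_nonneg_left (hcf x hx) hv.le
  calc c * orliczFundamentalFunction Φ (b - a)
      ≤ c * ((c * v)⁻¹ * (1 + (b - a) * Φ (c * v))) :=
        mul_le_mul_of_nonneg_left
          (ciInf_le (bddBelow_range_orliczFundamentalFunction hΦnonneg (sub_nonneg.2 hab)) ⟨c * v, hcv⟩) hc.le
    _ = v⁻¹ * (1 + (b - a) * Φ (c * v)) := by field_simp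
    _ ≤ v⁻¹ * (1 + ∫ x in (0:ℝ)..Δ, Φ (v * |f x|)) := by gcongr

end OrliczModular

noncomputable def bernsteinBump (n k : ℕ) (y : ℝ) : ℝ :=
  if y ∈ Icc (0 : ℝ) 1 then y ^ k * (1 - y) ^ (n - k) else 0

section bernsteinBump

variable {n k : ℕ}

@[fun_prop]
lemma measurable_bernsteinBump : Measurable (bernsteinBump n k) :=
  Measurable.ite measurableSet_Icc (by fun_prop) measurable_const

lemma abs_bernsteinBump_le_one (y : ℝ) : |bernsteinBump n k y| ≤ 1 := by
  unfold bernsteinBump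
  split_ifs with hy
  · obtain ⟨hy0, hy1⟩ := hy
    have h1y : 0 ≤ 1 - y := by linarith
    rw [abs_of_nonneg (by positivity)]
    exact mul_le_one₀ (pow_le_one₀ hy0 hy1) (pow_nonneg h1y _) (pow_le_one₀ h1y (by linarith))
  · simp

lemma le_bernsteinBump (hkn : k < n) {y : ℝ}
    (hy : y ∈ Icc ((k : ℝ) / (n + 1)) ((k + 1) / (n + 1))) :
    (k : ℝ) ^ k * ((n : ℝ) - k) ^ (n - k) / ((n : ℝ) + 1) ^ n ≤ bernsteinBump n k y := by
  have hkn' : (k : ℝ) + 1 ≤ n := by exact_mod_cast hkn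
  have hn1 : (0 : ℝ) < n + 1 := by positivity
  have hy0 : 0 ≤ y := le_trans (by positivity) hy.1
  have hy1 : y ≤ 1 := hy.2.trans ((div_le_one hn1).2 (by linarith))
  have h1y : ((n : ℝ) - k) / (n + 1) ≤ 1 - y := by
    have := (le_div_iff₀ hn1).1 hy.2
    rw [div_le_iff₀ hn1]
    linarith
  have hnk : (0 : ℝ) ≤ (n : ℝ) - k := by linarith
  rw [bernsteinBump, if_pos ⟨hy0, hy1⟩]
  calc (k : ℝ) ^ k * ((n : ℝ) - k) ^ (n - k) / ((n : ℝ) + 1) ^ n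
      = ((k : ℝ) / (n + 1)) ^ k * (((n : ℝ) - k) / (n + 1)) ^ (n - k) := by
        rw [div_pow, div_pow, div_mul_div_comm, ← pow_add, Nat.add_sub_cancel' hkn.le]
    _ ≤ y ^ k * (1 - y) ^ (n - k) := by
        gcongr
        exact hy.1

end bernsteinBump

theorem amemiya_norm_dilated_gnk_lower_general (Φ : ℝ → ℝ)
    (hΦmono : MonotoneOn Φ (Set.Ici 0)) (hΦnonneg : ∀ u, 0 ≤ u → 0 ≤ Φ u)
    (n k : ℕ) (hk0 : 0 < k) (hkn : k < n)
    (Δ : ℝ) (hΔ : 0 < Δ)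
    (g : ℝ → ℝ)
    (hg : ∀ x : ℝ, g x = if x ∈ Set.Icc (0:ℝ) 1 then x ^ k * (1 - x) ^ (n - k) else 0) :
    (⨅ v : Set.Ioi (0:ℝ),
        ((v : ℝ))⁻¹ * (1 + ∫ x in (0:ℝ)..Δ, Φ ((v : ℝ) * |g (x / Δ)|))) ≥
      ((k : ℝ) ^ k * ((n : ℝ) - k) ^ (n - k) / ((n : ℝ) + 1) ^ n) *
        ⨅ v : Set.Ioi (0:ℝ), ((v : ℝ))⁻¹ * (1 + (Δ / ((n : ℝ) + 1)) * Φ (v : ℝ)) := by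
  obtain rfl : g = bernsteinBump n k := funext hg
  have hkn' : (k : ℝ) + 1 ≤ n := by exact_mod_cast hkn
  have hc : (0 : ℝ) < (k : ℝ) ^ k * ((n : ℝ) - k) ^ (n - k) / ((n : ℝ) + 1) ^ n := by
    have : (0 : ℝ) < (n : ℝ) - k := by linarith
    positivity
  have hint (v : ℝ) (hv : 0 < v) :
      IntervalIntegrable (fun x => Φ (v * |bernsteinBump n k (x / Δ)|)) volume 0 Δ :=
    hΦmono.intervalIntegrable_comp_of_bounded (by fun_prop)
      (fun x => by positivity) (fun x => mul_le_of_le_one_right hv.le (abs_bernsteinBump_le_one _))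
      hΦnonneg 0 Δ
  have hlower (x : ℝ) (hx : x ∈ Ioc (Δ * (k / (n + 1))) (Δ * ((k + 1) / (n + 1)))) :
      (k : ℝ) ^ k * ((n : ℝ) - k) ^ (n - k) / ((n : ℝ) + 1) ^ n ≤ |bernsteinBump n k (x / Δ)| :=
    (le_bernsteinBump hkn ⟨(le_div_iff₀' hΔ).2 hx.1.le, (div_le_iff₀' hΔ).2 hx.2⟩).trans
      (le_abs_self _)
  have hmain := hΦmono.mul_orliczFundamentalFunction_le_amemiyaNorm hΦnonneg hint
    (by positivity) (by gcongr; linarith)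
    (by rw [mul_le_iff_le_one_right hΔ, div_le_one (by positivity)]; linarith) hc hlower
  rwa [show Δ * ((k + 1) / (n + 1)) - Δ * (k / (n + 1)) = Δ / ((n : ℝ) + 1) by ring] at hmain

/-- Lower bound for the Amemiya–Orlicz norm of the dilated function
`T_Δ g`, where `g x = x^k (1-x)^(n-k)` on `[0,1]` (extended by zero):
`‖T_Δ g‖_{L(Φ)} ≥ (k^k (n-k)^(n-k)/(n+1)^n) · φ(L(Φ), Δ/(n+1))`. -/
theorem amemiya_norm_dilated_gnk_lower (Φ : ℝ → ℝ) (hΦ0 : Φ 0 = 0)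
    (hΦmono : MonotoneOn Φ (Set.Ici 0)) (hΦnonneg : ∀ u, 0 ≤ u → 0 ≤ Φ u)
    (hΦconv : ConvexOn ℝ (Set.Ici 0) Φ)
    (n k : ℕ) (hn : 2 ≤ n) (hk0 : 0 < k) (hkn : k < n) (h2k : 2 * k ≤ n)
    (Δ : ℝ) (hΔ : 0 < Δ)
    (g : ℝ → ℝ)
    (hg : ∀ x : ℝ, g x = if x ∈ Set.Icc (0:ℝ) 1 then x ^ k * (1 - x) ^ (n - k) else 0) :
    (⨅ v : Set.Ioi (0:ℝ),
        ((v : ℝ))⁻¹ * (1 + ∫ x in (0:ℝ)..Δ, Φ ((v : ℝ) * |g (x / Δ)|))) ≥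
      ((k : ℝ) ^ k * ((n : ℝ) - k) ^ (n - k) / ((n : ℝ) + 1) ^ n) *
        ⨅ v : Set.Ioi (0:ℝ), ((v : ℝ))⁻¹ * (1 + (Δ / ((n : ℝ) + 1)) * Φ (v : ℝ)) :=
  amemiya_norm_dilated_gnk_lower_general Φ hΦmono hΦnonneg n k hk0 hkn Δ hΔ g hg
end
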